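/- For F(x) = ‖x⁺‖₂² on ℝ^n with gradient ∇F(x) = 2x⁺: if sequences (s_t), (m_t) in ℝ^n satisfy ⟨(S_{t-1} + m_t)⁺, s_t⟩ ≤ 0 for all 1 ≤ t ≤ T where S_t = ∑_{k=1}^t s_k and S_0 = 0, then ‖(S_T)⁺‖₂² ≤ ∑_{t=1}^T ‖s_t − m_t‖₂², and hence max_i (S_T)_i ≤ √(∑_{t=1}^T ‖s_t − m_t‖₂²). -/

import Mathlib

open RealInnerProductSpace

/-- Componentwise positive part (ReLU) on `ℝ^n`. -/
noncomputable def posPart17 {n : ℕ} (x : EuclideanSpace ℝ (Fin n)) :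
    EuclideanSpace ℝ (Fin n) := WithLp.toLp 2 (fun i => max (x i) 0)

/-!
With `F x = ‖x⁺‖²`, whose gradient is `2 x⁺`, convexity of `F` at `x + v` and `2`-smoothness
of `F` between `x + v` and `x + u` give the one-step inequality
`F (x + u) ≤ F x + 2 ⟪(x + v)⁺, u⟫ + ‖u - v‖²`.
Applied with `x = S_{t-1}`, `u = s_t`, `v = m_t`, the Blackwell condition kills the middle term,
and the bound on `F (S_T)` follows by telescoping. Since `F` is a sum over coordinates, both
inequalities reduce to the one-dimensional function `y ↦ (max y 0)²`.
-/

lemma sq_max_zero_convexity_bound (a b : ℝ) :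
    max (a + b) 0 ^ 2 ≤ max a 0 ^ 2 + 2 * max (a + b) 0 * b := by
  rcases le_or_gt (a + b) 0 with hab | hab
  · rw [max_eq_right hab, mul_zero, zero_mul, add_zero]
    gcongr
    exact le_max_right a 0
  · rw [max_eq_left hab.le]
    rcases le_or_gt a 0 with ha | ha
    · rw [max_eq_right ha]
      nlinarith
    · rw [max_eq_left ha.le]
      nlinarith [sq_nonneg b]

lemma sq_max_zero_smoothness_bound (y d : ℝ) :
    max (y + d) 0 ^ 2 ≤ max y 0 ^ 2 + 2 * max y 0 * d + d ^ 2 := by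
  rw [← add_sq]
  rcases le_or_gt (y + d) 0 with h | h
  · rw [max_eq_right h, zero_pow two_ne_zero]
    positivity
  · rw [max_eq_left h.le]
    exact pow_le_pow_left₀ h.le (by linarith [le_max_left y 0]) 2

lemma sq_max_zero_add_le (a b c : ℝ) :
    max (a + c) 0 ^ 2 ≤ max a 0 ^ 2 + 2 * (max (a + b) 0 * c) + (c - b) ^ 2 := by
  have hsmooth := sq_max_zero_smoothness_bound (a + b) (c - b)
  have hconvex := sq_max_zero_convexity_bound a b
  rw [add_add_sub_cancel] at hsmooth
  linarith

namespace posPart17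

variable {n : ℕ}

lemma apply (x : EuclideanSpace ℝ (Fin n)) (i : Fin n) : posPart17 x i = max (x i) 0 := rfl

lemma norm_sq_eq (x : EuclideanSpace ℝ (Fin n)) :
    ‖posPart17 x‖ ^ 2 = ∑ i, max (x i) 0 ^ 2 :=
  EuclideanSpace.real_norm_sq_eq _

lemma inner_eq (x u : EuclideanSpace ℝ (Fin n)) :
    ⟪posPart17 x, u⟫ = ∑ i, max (x i) 0 * u i := by
  simp only [PiLp.inner_apply, RCLike.inner_apply, conj_trivial, apply, mul_comm]

lemma norm_add_sq_le (x u v : EuclideanSpace ℝ (Fin n)) :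
    ‖posPart17 (x + u)‖ ^ 2 ≤
      ‖posPart17 x‖ ^ 2 + 2 * ⟪posPart17 (x + v), u⟫ + ‖u - v‖ ^ 2 := by
  simp only [inner_eq, EuclideanSpace.real_norm_sq_eq, PiLp.add_apply,
    PiLp.sub_apply, Finset.mul_sum, ← Finset.sum_add_distrib]
  exact Finset.sum_le_sum fun i _ => sq_max_zero_add_le (x i) (v i) (u i)

lemma apply_le_norm (x : EuclideanSpace ℝ (Fin n)) (i : Fin n) : x i ≤ ‖posPart17 x‖ :=
  calc x i ≤ posPart17 x i := le_max_left _ _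
    _ ≤ ‖posPart17 x i‖ := Real.le_norm_self _
    _ ≤ ‖posPart17 x‖ := PiLp.norm_apply_le _ _

lemma norm_sq_le_sum_norm_sub_sq (s m S : ℕ → EuclideanSpace ℝ (Fin n))
    (hS : ∀ t, S t = ∑ k ∈ Finset.Icc 1 t, s k) (T : ℕ)
    (hblackwell : ∀ t ∈ Finset.Icc 1 T, ⟪posPart17 (S (t - 1) + m t), s t⟫ ≤ 0) :
    ‖posPart17 (S T)‖ ^ 2 ≤ ∑ t ∈ Finset.Icc 1 T, ‖s t - m t‖ ^ 2 := by
  induction T with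
  | zero =>
    have hS0 : S 0 = 0 := by simp [hS]
    simp [norm_sq_eq, hS0]
  | succ T ih =>
    have hstep : S (T + 1) = S T + s (T + 1) := by
      rw [hS, hS, Finset.sum_Icc_succ_top (by omega)]
    have hlast : ⟪posPart17 (S T + m (T + 1)), s (T + 1)⟫ ≤ 0 :=
      hblackwell (T + 1) (by simp)
    have hprev := ih fun t ht => hblackwell t (Finset.Icc_subset_Icc_right T.le_succ ht)
    have hone := norm_add_sq_le (S T) (s (T + 1)) (m (T + 1))
    rw [Finset.sum_Icc_succ_top (by omega), hstep]
    linarith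

end posPart17

theorem stmt_17 {n : ℕ} (T : ℕ)
    (s m : ℕ → EuclideanSpace ℝ (Fin n))
    (S : ℕ → EuclideanSpace ℝ (Fin n))
    (hS : ∀ t, S t = ∑ k ∈ Finset.Icc 1 t, s k)
    (hblackwell : ∀ t ∈ Finset.Icc 1 T, ⟪posPart17 (S (t - 1) + m t), s t⟫ ≤ 0) :
    ‖posPart17 (S T)‖ ^ 2 ≤ ∑ t ∈ Finset.Icc 1 T, ‖s t - m t‖ ^ 2 ∧
      ∀ i, S T i ≤ Real.sqrt (∑ t ∈ Finset.Icc 1 T, ‖s t - m t‖ ^ 2) := by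
  have hbound := posPart17.norm_sq_le_sum_norm_sub_sq s m S hS T hblackwell
  refine ⟨hbound, fun i => ?_⟩
  calc S T i ≤ ‖posPart17 (S T)‖ := posPart17.apply_le_norm _ i
    _ ≤ _ := Real.le_sqrt_of_sq_le hbound
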